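/- Let λ1 ≥ λ2 ≥ λ3 ≥ λ4 ≥ 0 with λ1 + λ2 + λ3 + λ4 = 1, and suppose 2λ2 + λ3 − λ1 < 0 and 2λ3 + λ4 − λ2 < 0 (spectral region A). Then there exists no non-entangling (NE) map Λ satisfying Λ(ρ_λ) = σ_λ, where ρ_λ = λ1 Φ1 + λ2 |01⟩⟨01| + λ3 Φ2 + λ4 |10⟩⟨10| and σ_λ = λ1 Φ1 + λ2 Φ2 + λ3 Φ3 + λ4 Φ4. -/

import Mathlib

open Matrix Kronecker Polynomial
open scoped ComplexOrder

noncomputable section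

/-- Index set for two qubits: ℂ²⊗ℂ² ≅ ℂ⁴ with basis |00⟩,|01⟩,|10⟩,|11⟩. -/
abbrev Q2 : Type := Fin 2 × Fin 2
abbrev Mat2 : Type := Matrix (Fin 2) (Fin 2) ℂ
abbrev Mat4 : Type := Matrix Q2 Q2 ℂ
abbrev Vec4 : Type := Q2 → ℂ

/-- Computational basis vector |ij⟩. -/
def ket (i j : Fin 2) : Vec4 := fun p => if p = (i, j) then 1 else 0

/-- The rank-one matrix |ψ⟩⟨φ|. -/
def ketBra (ψ φ : Vec4) : Mat4 := fun p q => ψ p * star (φ q)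

/-- The four Bell vectors |Φ1⟩,…,|Φ4⟩. -/
def bell : Fin 4 → Vec4 :=
  ![(Real.sqrt 2 : ℂ)⁻¹ • (ket 0 0 + ket 1 1),
    (Real.sqrt 2 : ℂ)⁻¹ • (ket 0 0 - ket 1 1),
    (Real.sqrt 2 : ℂ)⁻¹ • (ket 1 0 + ket 0 1),
    (Real.sqrt 2 : ℂ)⁻¹ • (ket 1 0 - ket 0 1)]

/-- Bell projectors Φ_i = |Φ_i⟩⟨Φ_i|. -/
def bellProj (i : Fin 4) : Mat4 := ketBra (bell i) (bell i)

/-- A two-qubit density matrix: Hermitian positive semidefinite with trace one. -/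
def IsDensity (ρ : Mat4) : Prop := ρ.PosSemidef ∧ ρ.trace = 1

/-- Unit vector in ℂ². -/
def IsUnitVec (u : Fin 2 → ℂ) : Prop := ∑ x, Complex.normSq (u x) = 1

/-- Separable two-qubit density matrix: convex mixture of products of pure states. -/
def SepState (ρ : Mat4) : Prop :=
  ∃ (n : ℕ) (p : Fin n → ℝ) (u v : Fin n → Fin 2 → ℂ),
    (∀ i, 0 ≤ p i) ∧ (∑ i, p i = 1) ∧
    (∀ i, IsUnitVec (u i)) ∧ (∀ i, IsUnitVec (v i)) ∧
    ρ = ∑ i, (p i : ℂ) • (vecMulVec (u i) (star (u i)) ⊗ₖ vecMulVec (v i) (star (v i)))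

/-- A SEP map: Kraus operators in product form, trace preserving. -/
def IsSEP (T : Mat4 → Mat4) : Prop :=
  ∃ (k : ℕ) (A B : Fin k → Mat2),
    (∑ i, (A i ⊗ₖ B i)ᴴ * (A i ⊗ₖ B i) = 1) ∧
    ∀ X, T X = ∑ i, (A i ⊗ₖ B i) * X * (A i ⊗ₖ B i)ᴴ

/-- CPTP map in Kraus form. -/
def IsCPTP (T : Mat4 → Mat4) : Prop :=
  ∃ (k : ℕ) (K : Fin k → Mat4),
    (∑ i, (K i)ᴴ * K i = 1) ∧ ∀ X, T X = ∑ i, K i * X * (K i)ᴴ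

/-- Non-entangling (NE) map: CPTP and maps separable states to separable states. -/
def IsNE (T : Mat4 → Mat4) : Prop :=
  IsCPTP T ∧ ∀ ρ, SepState ρ → SepState (T ρ)

/-- The MEMS state ρ_λ = λ1 Φ1 + λ2 |01⟩⟨01| + λ3 Φ2 + λ4 |10⟩⟨10|. -/
def mems (l1 l2 l3 l4 : ℝ) : Mat4 :=
  (l1 : ℂ) • bellProj 0 + (l2 : ℂ) • ketBra (ket 0 1) (ket 0 1) +
  (l3 : ℂ) • bellProj 1 + (l4 : ℂ) • ketBra (ket 1 0) (ket 1 0)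

/-- The Bell-diagonal state σ_λ = λ1 Φ1 + λ2 Φ2 + λ3 Φ3 + λ4 Φ4. -/
def bdiag (l1 l2 l3 l4 : ℝ) : Mat4 :=
  (l1 : ℂ) • bellProj 0 + (l2 : ℂ) • bellProj 1 + (l3 : ℂ) • bellProj 2 + (l4 : ℂ) • bellProj 3

/-- The normalized vector |Φ1(ε)⟩ = (|Φ1⟩ + ε|10⟩)/√(1+ε²). -/
def phi1eps (ε : ℝ) : Vec4 :=
  (Real.sqrt (1 + ε ^ 2) : ℂ)⁻¹ • (bell 0 + (ε : ℂ) • ket 1 0)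

/- ============ auxiliary development ============ -/

-- scalar facts about √2
lemma sqrt2_mul_self' : (Real.sqrt 2 : ℂ) * (Real.sqrt 2 : ℂ) = 2 := by
  rw [← Complex.ofReal_mul, Real.mul_self_sqrt (by norm_num : (0:ℝ) ≤ 2)]; norm_num

@[simp] lemma star_sqrt2_inv : star ((Real.sqrt 2 : ℂ)⁻¹) = (Real.sqrt 2 : ℂ)⁻¹ := by
  rw [star_inv₀, Complex.star_def, Complex.conj_ofReal]

@[simp] lemma inv_sqrt2_mul : (Real.sqrt 2 : ℂ)⁻¹ * (Real.sqrt 2 : ℂ)⁻¹ = 2⁻¹ := by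
  rw [← mul_inv, sqrt2_mul_self']

-- sums over Q2
lemma sumQ2 (f : Q2 → ℂ) : ∑ p, f p = f (0,0) + f (0,1) + f (1,0) + f (1,1) := by
  rw [Fintype.sum_prod_type]
  simp [Fin.sum_univ_two]
  ring

-- values of bell vectors
lemma bell_e0 : bell 0 = (Real.sqrt 2 : ℂ)⁻¹ • (ket 0 0 + ket 1 1) := rfl
lemma bell_e1 : bell 1 = (Real.sqrt 2 : ℂ)⁻¹ • (ket 0 0 - ket 1 1) := rfl
lemma bell_e2 : bell 2 = (Real.sqrt 2 : ℂ)⁻¹ • (ket 1 0 + ket 0 1) := rfl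
lemma bell_e3 : bell 3 = (Real.sqrt 2 : ℂ)⁻¹ • (ket 1 0 - ket 0 1) := rfl

@[simp] lemma bell0_v00 : bell 0 (0,0) = (Real.sqrt 2 : ℂ)⁻¹ := by norm_num [bell_e0, bell_e1, bell_e2, bell_e3, ket, Prod.ext_iff]
@[simp] lemma bell0_v01 : bell 0 (0,1) = 0 := by norm_num [bell_e0, bell_e1, bell_e2, bell_e3, ket, Prod.ext_iff]
@[simp] lemma bell0_v10 : bell 0 (1,0) = 0 := by norm_num [bell_e0, bell_e1, bell_e2, bell_e3, ket, Prod.ext_iff]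
@[simp] lemma bell0_v11 : bell 0 (1,1) = (Real.sqrt 2 : ℂ)⁻¹ := by norm_num [bell_e0, bell_e1, bell_e2, bell_e3, ket, Prod.ext_iff]
@[simp] lemma bell1_v00 : bell 1 (0,0) = (Real.sqrt 2 : ℂ)⁻¹ := by norm_num [bell_e0, bell_e1, bell_e2, bell_e3, ket, Prod.ext_iff]
@[simp] lemma bell1_v01 : bell 1 (0,1) = 0 := by norm_num [bell_e0, bell_e1, bell_e2, bell_e3, ket, Prod.ext_iff]
@[simp] lemma bell1_v10 : bell 1 (1,0) = 0 := by norm_num [bell_e0, bell_e1, bell_e2, bell_e3, ket, Prod.ext_iff]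
@[simp] lemma bell1_v11 : bell 1 (1,1) = -(Real.sqrt 2 : ℂ)⁻¹ := by norm_num [bell_e0, bell_e1, bell_e2, bell_e3, ket, Prod.ext_iff]
@[simp] lemma bell2_v00 : bell 2 (0,0) = 0 := by norm_num [bell_e0, bell_e1, bell_e2, bell_e3, ket, Prod.ext_iff]
@[simp] lemma bell2_v01 : bell 2 (0,1) = (Real.sqrt 2 : ℂ)⁻¹ := by norm_num [bell_e0, bell_e1, bell_e2, bell_e3, ket, Prod.ext_iff]
@[simp] lemma bell2_v10 : bell 2 (1,0) = (Real.sqrt 2 : ℂ)⁻¹ := by norm_num [bell_e0, bell_e1, bell_e2, bell_e3, ket, Prod.ext_iff]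
@[simp] lemma bell2_v11 : bell 2 (1,1) = 0 := by norm_num [bell_e0, bell_e1, bell_e2, bell_e3, ket, Prod.ext_iff]
@[simp] lemma bell3_v00 : bell 3 (0,0) = 0 := by norm_num [bell_e0, bell_e1, bell_e2, bell_e3, ket, Prod.ext_iff]
@[simp] lemma bell3_v01 : bell 3 (0,1) = -(Real.sqrt 2 : ℂ)⁻¹ := by norm_num [bell_e0, bell_e1, bell_e2, bell_e3, ket, Prod.ext_iff]
@[simp] lemma bell3_v10 : bell 3 (1,0) = (Real.sqrt 2 : ℂ)⁻¹ := by norm_num [bell_e0, bell_e1, bell_e2, bell_e3, ket, Prod.ext_iff]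
@[simp] lemma bell3_v11 : bell 3 (1,1) = 0 := by norm_num [bell_e0, bell_e1, bell_e2, bell_e3, ket, Prod.ext_iff]


@[simp] lemma bell0_vz : bell 0 (0 : Q2) = (Real.sqrt 2 : ℂ)⁻¹ := bell0_v00
@[simp] lemma bell0_vo : bell 0 (1 : Q2) = (Real.sqrt 2 : ℂ)⁻¹ := bell0_v11
@[simp] lemma bell1_vz : bell 1 (0 : Q2) = (Real.sqrt 2 : ℂ)⁻¹ := bell1_v00
@[simp] lemma bell1_vo : bell 1 (1 : Q2) = -(Real.sqrt 2 : ℂ)⁻¹ := bell1_v11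
@[simp] lemma bell2_vz : bell 2 (0 : Q2) = 0 := bell2_v00
@[simp] lemma bell2_vo : bell 2 (1 : Q2) = 0 := bell2_v11
@[simp] lemma bell3_vz : bell 3 (0 : Q2) = 0 := bell3_v00
@[simp] lemma bell3_vo : bell 3 (1 : Q2) = 0 := bell3_v11

-- basic dot/trace lemmas
lemma ketBra_mulVec (w v x : Vec4) : ketBra w v *ᵥ x = (star v ⬝ᵥ x) • w := by
  ext p
  simp only [Matrix.mulVec, dotProduct, ketBra, Pi.smul_apply, smul_eq_mul,
    Pi.star_apply, Finset.sum_mul]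
  exact Finset.sum_congr rfl (fun q _ => by ring)

lemma trace_ketBra_mul (w v : Vec4) (B : Mat4) :
    Matrix.trace (ketBra w v * B) = star v ⬝ᵥ (B *ᵥ w) := by
  simp only [Matrix.trace, Matrix.diag, Matrix.mul_apply, ketBra, dotProduct,
    Matrix.mulVec, Pi.star_apply]
  rw [Finset.sum_comm]
  refine Finset.sum_congr rfl (fun q _ => ?_)
  rw [Finset.mul_sum]
  exact Finset.sum_congr rfl (fun p _ => by ring)

lemma dot_conjTranspose (A : Mat4) (w v : Vec4) :
    star v ⬝ᵥ (Aᴴ *ᵥ w) = star (star w ⬝ᵥ (A *ᵥ v)) := by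
  simp only [dotProduct, Matrix.mulVec, Matrix.conjTranspose_apply, Pi.star_apply,
    star_sum, star_mul', star_star, Finset.mul_sum]
  rw [Finset.sum_comm]
  refine Finset.sum_congr rfl (fun q _ => Finset.sum_congr rfl (fun p _ => by ring))

lemma trace_ketBra_conj (w v : Vec4) (A : Mat4) :
    Matrix.trace (ketBra w w * (A * ketBra v v * Aᴴ)) =
      (Complex.normSq (star w ⬝ᵥ (A *ᵥ v)) : ℂ) := by
  rw [trace_ketBra_mul]
  rw [show (A * ketBra v v * Aᴴ) *ᵥ w = A *ᵥ (ketBra v v *ᵥ (Aᴴ *ᵥ w)) by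
    rw [Matrix.mulVec_mulVec, Matrix.mulVec_mulVec, Matrix.mul_assoc]]
  rw [ketBra_mulVec, dot_conjTranspose, Matrix.mulVec_smul, dotProduct_smul,
    Complex.normSq_eq_conj_mul_self]
  simp [smul_eq_mul, Complex.star_def]

lemma trace_ketBra_ketBra (w x : Vec4) :
    Matrix.trace (ketBra w w * ketBra x x) = (Complex.normSq (star w ⬝ᵥ x) : ℂ) := by
  rw [trace_ketBra_mul, ketBra_mulVec, dotProduct_smul]
  rw [show star x ⬝ᵥ w = star (star w ⬝ᵥ x) by
    simp only [dotProduct, Pi.star_apply, star_sum, star_mul', star_star]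
    exact Finset.sum_congr rfl (fun q _ => by ring)]
  rw [Complex.normSq_eq_conj_mul_self]
  simp [smul_eq_mul, Complex.star_def]

lemma trace_ketBra (w v : Vec4) : Matrix.trace (ketBra w v) = star v ⬝ᵥ w := by
  have := trace_ketBra_mul w v 1
  rwa [Matrix.mul_one, Matrix.one_mulVec] at this

-- bell gram (specific instances)
section
set_option maxHeartbeats 800000

lemma gram_tac : True := trivial

lemma gram00 : star (bell 0) ⬝ᵥ bell 0 = 1 := by
  rw [dotProduct, sumQ2]; simp; all_goals norm_num
lemma gram01 : star (bell 0) ⬝ᵥ bell 1 = 0 := by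
  rw [dotProduct, sumQ2]; simp; all_goals norm_num
lemma gram02 : star (bell 0) ⬝ᵥ bell 2 = 0 := by
  rw [dotProduct, sumQ2]; simp; all_goals norm_num
lemma gram03 : star (bell 0) ⬝ᵥ bell 3 = 0 := by
  rw [dotProduct, sumQ2]; simp; all_goals norm_num
lemma gram10 : star (bell 1) ⬝ᵥ bell 0 = 0 := by
  rw [dotProduct, sumQ2]; simp; all_goals norm_num
lemma gram11 : star (bell 1) ⬝ᵥ bell 1 = 1 := by
  rw [dotProduct, sumQ2]; simp; all_goals norm_num
lemma gram12 : star (bell 1) ⬝ᵥ bell 2 = 0 := by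
  rw [dotProduct, sumQ2]; simp; all_goals norm_num
lemma gram13 : star (bell 1) ⬝ᵥ bell 3 = 0 := by
  rw [dotProduct, sumQ2]; simp; all_goals norm_num
end

-- ketBra bilinearity
lemma ketBra_add_left (a b v : Vec4) : ketBra (a + b) v = ketBra a v + ketBra b v := by
  ext p q; simp [ketBra]; ring
lemma ketBra_add_right (a u v : Vec4) : ketBra a (u + v) = ketBra a u + ketBra a v := by
  ext p q; simp [ketBra, star_add]; ring
lemma ketBra_sub_left (a b v : Vec4) : ketBra (a - b) v = ketBra a v - ketBra b v := by
  ext p q; simp [ketBra]; ring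
lemma ketBra_sub_right (a u v : Vec4) : ketBra a (u - v) = ketBra a u - ketBra a v := by
  ext p q; simp [ketBra, star_sub]; ring
lemma ketBra_smul_left (s : ℂ) (a v : Vec4) : ketBra (s • a) v = s • ketBra a v := by
  ext p q; simp [ketBra]; ring
lemma ketBra_smul_right (s : ℂ) (a v : Vec4) : ketBra a (s • v) = star s • ketBra a v := by
  ext p q; simp [ketBra]; ring

-- product vectors and separable pure states
def pvec (u v : Fin 2 → ℂ) : Vec4 := fun p => u p.1 * v p.2

lemma kron_pure (u v : Fin 2 → ℂ) :
    vecMulVec u (star u) ⊗ₖ vecMulVec v (star v) = ketBra (pvec u v) (pvec u v) := by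
  ext ⟨a,b⟩ ⟨c,d⟩
  simp [Matrix.kroneckerMap_apply, Matrix.vecMulVec_apply, ketBra, pvec, star_mul']
  ring

lemma sep_pure (u v : Fin 2 → ℂ) (hu : IsUnitVec u) (hv : IsUnitVec v) :
    SepState (ketBra (pvec u v) (pvec u v)) := by
  refine ⟨1, fun _ => 1, fun _ => u, fun _ => v, fun _ => by norm_num, by simp,
    fun _ => hu, fun _ => hv, ?_⟩
  simp [kron_pure]

def e2 (i : Fin 2) : Fin 2 → ℂ := fun x => if x = i then 1 else 0

lemma unit_e2 (i : Fin 2) : IsUnitVec (e2 i) := by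
  fin_cases i <;> simp [IsUnitVec, e2, Fin.sum_univ_two]

lemma pvec_e2 (i j : Fin 2) : pvec (e2 i) (e2 j) = ket i j := by
  funext p
  obtain ⟨a,b⟩ := p
  by_cases ha : a = i <;> by_cases hb : b = j <;>
    simp [pvec, e2, ket, Prod.ext_iff, ha, hb]

def uc (c : ℂ) : Fin 2 → ℂ :=
  fun x => if x = 0 then (Real.sqrt 2 : ℂ)⁻¹ else (Real.sqrt 2 : ℂ)⁻¹ * c

lemma unit_uc (c : ℂ) (hc : Complex.normSq c = 1) : IsUnitVec (uc c) := by
  simp [IsUnitVec, uc, Fin.sum_univ_two, Complex.normSq_mul, hc, Complex.normSq_inv,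
    Complex.normSq_ofReal, Real.mul_self_sqrt (by norm_num : (0:ℝ) ≤ 2)]
  norm_num

def wv (c d : ℂ) : Vec4 :=
  fun p => (2:ℂ)⁻¹ * ((if p.1 = 0 then 1 else c) * (if p.2 = 0 then 1 else d))

@[simp] lemma inv_sqrt2_pow : ((Real.sqrt 2 : ℂ))⁻¹ ^ 2 = 2⁻¹ := by
  rw [sq, inv_sqrt2_mul]

@[simp] lemma sqrt2_sq_c : ((Real.sqrt 2 : ℂ)) ^ 2 = 2 := by
  rw [sq, sqrt2_mul_self']

lemma pvec_uc (c d : ℂ) : pvec (uc c) (uc d) = wv c d := by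
  funext p
  obtain ⟨a,b⟩ := p
  fin_cases a <;> fin_cases b <;>
    all_goals (simp [pvec, uc, wv]; try ring_nf; try simp; try norm_num; try ring)

-- matrix identities
lemma two_bellProj0 :
    ketBra (ket 0 0 + ket 1 1) (ket 0 0 + ket 1 1) = (2:ℂ) • bellProj 0 := by
  rw [bellProj, bell_e0, ketBra_smul_left, ketBra_smul_right, star_sqrt2_inv,
    smul_smul, smul_smul, mul_assoc, inv_sqrt2_mul]
  norm_num

lemma idI2 : bellProj 0 + bellProj 1
    = ketBra (ket 0 0) (ket 0 0) + ketBra (ket 1 1) (ket 1 1) := by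
  rw [bellProj, bellProj, bell_e0, bell_e1]
  simp only [ketBra_smul_left, ketBra_smul_right, star_sqrt2_inv, smul_smul, inv_sqrt2_mul,
    inv_sqrt2_pow, ketBra_add_left, ketBra_add_right, ketBra_sub_left, ketBra_sub_right]
  match_scalars <;> (try ring_nf) <;> (try simp) <;> (try norm_num)

lemma idI2' : bellProj 2 + bellProj 3
    = ketBra (ket 1 0) (ket 1 0) + ketBra (ket 0 1) (ket 0 1) := by
  rw [bellProj, bellProj, bell_e2, bell_e3]
  simp only [ketBra_smul_left, ketBra_smul_right, star_sqrt2_inv, smul_smul, inv_sqrt2_mul,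
    inv_sqrt2_pow, ketBra_add_left, ketBra_add_right, ketBra_sub_left, ketBra_sub_right]
  match_scalars <;> (try ring_nf) <;> (try simp) <;> (try norm_num)

lemma idBasis : ketBra (ket 0 0) (ket 0 0) + ketBra (ket 1 1) (ket 1 1)
    + ketBra (ket 1 0) (ket 1 0) + ketBra (ket 0 1) (ket 0 1) = (1 : Mat4) := by
  ext ⟨a,b⟩ ⟨c,d⟩
  fin_cases a <;> fin_cases b <;> fin_cases c <;> fin_cases d <;>
    simp [ketBra, ket, Matrix.one_apply, Prod.ext_iff]

lemma idI1 : bellProj 0 + bellProj 1 + bellProj 2 + bellProj 3 = (1 : Mat4) := by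
  have h := idBasis
  rw [← h]
  rw [show bellProj 0 + bellProj 1 + bellProj 2 + bellProj 3
      = (bellProj 0 + bellProj 1) + (bellProj 2 + bellProj 3) by abel, idI2, idI2']
  abel

set_option maxHeartbeats 1000000 in
lemma idI3 : ketBra (wv 1 1) (wv 1 1) + ketBra (wv (-1) (-1)) (wv (-1) (-1))
    + ketBra (wv Complex.I (-Complex.I)) (wv Complex.I (-Complex.I))
    + ketBra (wv (-Complex.I) Complex.I) (wv (-Complex.I) Complex.I)
    = ketBra (ket 0 1) (ket 0 1) + ketBra (ket 1 0) (ket 1 0)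
      + ketBra (ket 0 0 + ket 1 1) (ket 0 0 + ket 1 1) := by
  ext ⟨a,b⟩ ⟨c,d⟩
  fin_cases a <;> fin_cases b <;> fin_cases c <;> fin_cases d <;>
    all_goals (simp [ketBra, wv, ket, Prod.ext_iff, star_mul', Complex.star_def, map_inv₀, map_ofNat]; try ring_nf; try simp [Complex.I_sq]; try norm_num)

-- Cauchy–Schwarz for two terms
lemma cs2 (x y z w : ℂ) (hx : Complex.normSq x + Complex.normSq y = 1)
    (hz : Complex.normSq z + Complex.normSq w = 1) :
    Complex.normSq (x * z + y * w) ≤ 1 := by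
  have habs : ‖x * z + y * w‖
      ≤ ‖x‖ * ‖z‖ + ‖y‖ * ‖w‖ := by
    calc ‖x * z + y * w‖ ≤ ‖x * z‖ + ‖y * w‖ :=
          norm_add_le _ _
      _ = _ := by rw [norm_mul, norm_mul]
  have h1 : Complex.normSq (x * z + y * w) = ‖x * z + y * w‖ ^ 2 :=
    (Complex.sq_norm _).symm
  have hx' : ‖x‖ ^ 2 + ‖y‖ ^ 2 = 1 := by
    rw [Complex.sq_norm, Complex.sq_norm]; exact hx
  have hz' : ‖z‖ ^ 2 + ‖w‖ ^ 2 = 1 := by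
    rw [Complex.sq_norm, Complex.sq_norm]; exact hz
  nlinarith [norm_nonneg (x * z + y * w), norm_nonneg x, norm_nonneg y,
    norm_nonneg z, norm_nonneg w,
    sq_nonneg (‖x‖ * ‖w‖ - ‖y‖ * ‖z‖)]

@[simp] lemma normSq_inv_sqrt2 : Complex.normSq ((Real.sqrt 2 : ℂ)⁻¹) = 1/2 := by
  rw [Complex.normSq_inv, Complex.normSq_ofReal,
    Real.mul_self_sqrt (by norm_num : (0:ℝ) ≤ 2)]
  norm_num

lemma unit2 (u : Fin 2 → ℂ) (hu : IsUnitVec u) :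
    Complex.normSq (u 0) + Complex.normSq (u 1) = 1 := by
  rw [IsUnitVec, Fin.sum_univ_two] at hu; exact hu

lemma bellFid (i : Fin 4) (u v : Fin 2 → ℂ) (hu : IsUnitVec u) (hv : IsUnitVec v) :
    Complex.normSq (star (bell i) ⬝ᵥ pvec u v) ≤ 1/2 := by
  have hu2 := unit2 u hu
  have hv2 := unit2 v hv
  fin_cases i
  · show Complex.normSq (star (bell 0) ⬝ᵥ pvec u v) ≤ 1/2
    rw [show star (bell 0) ⬝ᵥ pvec u v
        = (Real.sqrt 2 : ℂ)⁻¹ * (u 0 * v 0 + u 1 * v 1) by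
      rw [dotProduct, sumQ2]; simp [pvec]; ring]
    rw [Complex.normSq_mul, normSq_inv_sqrt2]
    have := cs2 (u 0) (u 1) (v 0) (v 1) hu2 hv2
    linarith
  · show Complex.normSq (star (bell 1) ⬝ᵥ pvec u v) ≤ 1/2
    rw [show star (bell 1) ⬝ᵥ pvec u v
        = (Real.sqrt 2 : ℂ)⁻¹ * (u 0 * v 0 + (-(u 1)) * v 1) by
      rw [dotProduct, sumQ2]; simp [pvec]; ring]
    rw [Complex.normSq_mul, normSq_inv_sqrt2]
    have := cs2 (u 0) (-(u 1)) (v 0) (v 1) (by rw [Complex.normSq_neg]; exact hu2) hv2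
    linarith
  · show Complex.normSq (star (bell 2) ⬝ᵥ pvec u v) ≤ 1/2
    rw [show star (bell 2) ⬝ᵥ pvec u v
        = (Real.sqrt 2 : ℂ)⁻¹ * (u 1 * v 0 + u 0 * v 1) by
      rw [dotProduct, sumQ2]; simp [pvec]; ring]
    rw [Complex.normSq_mul, normSq_inv_sqrt2]
    have := cs2 (u 1) (u 0) (v 0) (v 1) (by linarith) hv2
    linarith
  · show Complex.normSq (star (bell 3) ⬝ᵥ pvec u v) ≤ 1/2
    rw [show star (bell 3) ⬝ᵥ pvec u v
        = (Real.sqrt 2 : ℂ)⁻¹ * (u 1 * v 0 + (-(u 0)) * v 1) by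
      rw [dotProduct, sumQ2]; simp [pvec]; ring]
    rw [Complex.normSq_mul, normSq_inv_sqrt2]
    have := cs2 (u 1) (-(u 0)) (v 0) (v 1) (by rw [Complex.normSq_neg]; linarith) hv2
    linarith

-- separable states have Bell fidelity at most 1/2
lemma sep_fid (i : Fin 4) (Y : Mat4) (hY : SepState Y) :
    (Matrix.trace (bellProj i * Y)).re ≤ 1/2 := by
  obtain ⟨n, pr, u, v, hp0, hp1, hu, hv, hE⟩ := hY
  subst hE
  rw [Matrix.mul_sum, Matrix.trace_sum]
  have hterm : ∀ j, Matrix.trace (bellProj i * ((pr j : ℂ) •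
      (vecMulVec (u j) (star (u j)) ⊗ₖ vecMulVec (v j) (star (v j)))))
      = (pr j : ℂ) • ((Complex.normSq (star (bell i) ⬝ᵥ pvec (u j) (v j)) : ℝ) : ℂ) := by
    intro j
    rw [Matrix.mul_smul, Matrix.trace_smul, kron_pure, bellProj, trace_ketBra_ketBra]
  rw [Finset.sum_congr rfl (fun j _ => hterm j)]
  rw [Complex.re_sum]
  have hle : ∀ j ∈ Finset.univ, (((pr j : ℂ) • (Complex.normSq (star (bell i) ⬝ᵥ pvec (u j) (v j)) : ℂ)).re)
      ≤ pr j * (1/2) := by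
    intro j _
    rw [smul_eq_mul, Complex.re_ofReal_mul]
    have h2 : (Complex.normSq (star (bell i) ⬝ᵥ pvec (u j) (v j)) : ℂ).re
        ≤ 1/2 := by
      rw [Complex.ofReal_re]; exact bellFid i (u j) (v j) (hu j) (hv j)
    exact mul_le_mul_of_nonneg_left h2 (hp0 j)
  calc _ ≤ ∑ j, pr j * (1/2) := Finset.sum_le_sum hle
    _ = (∑ j, pr j) * (1/2) := by rw [Finset.sum_mul]
    _ = 1/2 := by rw [hp1]; ring

-- Kraus positivity
lemma phi_pos (i : Fin 4) {k : ℕ} (K : Fin k → Mat4) (T : Mat4 → Mat4)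
    (hKr : ∀ X, T X = ∑ j, K j * X * (K j)ᴴ) (v : Vec4) :
    0 ≤ (Matrix.trace (bellProj i * T (ketBra v v))).re := by
  rw [hKr, Matrix.mul_sum, Matrix.trace_sum, Complex.re_sum]
  apply Finset.sum_nonneg
  intro j _
  rw [show (bellProj i : Mat4) = ketBra (bell i) (bell i) from rfl, trace_ketBra_conj,
    Complex.ofReal_re]
  exact Complex.normSq_nonneg _

-- trace preservation
lemma T_tp {k : ℕ} (K : Fin k → Mat4) (hK : ∑ j, (K j)ᴴ * K j = 1) (X : Mat4) :
    Matrix.trace (∑ j, K j * X * (K j)ᴴ) = Matrix.trace X := by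
  rw [Matrix.trace_sum]
  rw [Finset.sum_congr rfl (fun j _ => Matrix.trace_mul_cycle (K j) X (K j)ᴴ)]
  rw [← Matrix.trace_sum,
    show ∑ j, (K j)ᴴ * K j * X = (∑ j, (K j)ᴴ * K j) * X from (Finset.sum_mul _ _ _).symm,
    hK, Matrix.one_mul]

set_option maxHeartbeats 1600000


theorem no_NE_regionA (l1 l2 l3 l4 : ℝ)
    (h12 : l2 ≤ l1) (h23 : l3 ≤ l2) (h34 : l4 ≤ l3) (h4 : 0 ≤ l4)
    (hsum : l1 + l2 + l3 + l4 = 1)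
    (hA1 : 2 * l2 + l3 - l1 < 0) (hA2 : 2 * l3 + l4 - l2 < 0) :
    ¬ ∃ T : Mat4 → Mat4, IsNE T ∧ T (mems l1 l2 l3 l4) = bdiag l1 l2 l3 l4 := by
  rintro ⟨T, ⟨⟨k, K, hK1, hKr⟩, hNE⟩, hTρ⟩
  -- linearity of T
  have hTadd : ∀ X Y, T (X + Y) = T X + T Y := by
    intro X Y
    rw [hKr, hKr, hKr, ← Finset.sum_add_distrib]
    exact Finset.sum_congr rfl fun j _ => by rw [Matrix.mul_add, Matrix.add_mul]
  have hTsmul : ∀ (c : ℂ) (X), T (c • X) = c • T X := by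
    intro c X
    rw [hKr, hKr, Finset.smul_sum]
    exact Finset.sum_congr rfl fun j _ => by rw [Matrix.mul_smul, Matrix.smul_mul]
  have htp : ∀ X, Matrix.trace (T X) = Matrix.trace X := fun X => by
    rw [hKr]; exact T_tp K hK1 X
  have hpos : ∀ (i : Fin 4) (v : Vec4), 0 ≤ (Matrix.trace (bellProj i * T (ketBra v v))).re :=
    fun i v => phi_pos i K T hKr v
  have hsep : ∀ (i : Fin 4) (u v : Fin 2 → ℂ), IsUnitVec u → IsUnitVec v →
      (Matrix.trace (bellProj i * T (ketBra (pvec u v) (pvec u v)))).re ≤ 1/2 :=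
    fun i u v hu hv => sep_fid i _ (hNE _ (sep_pure u v hu hv))
  -- trace of bell projectors against any matrix sums to the full trace
  have hcomplete : ∀ Y : Mat4,
      Matrix.trace (bellProj 0 * Y) + Matrix.trace (bellProj 1 * Y)
      + Matrix.trace (bellProj 2 * Y) + Matrix.trace (bellProj 3 * Y) = Matrix.trace Y := by
    intro Y
    rw [← Matrix.trace_add, ← Matrix.trace_add, ← Matrix.trace_add,
      ← Matrix.add_mul, ← Matrix.add_mul, ← Matrix.add_mul, idI1, Matrix.one_mul]
  have hBB : ∀ i j : Fin 4, Matrix.trace (bellProj i * bellProj j)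
      = ((Complex.normSq (star (bell i) ⬝ᵥ bell j) : ℝ) : ℂ) :=
    fun i j => trace_ketBra_ketBra (bell i) (bell j)
  -- the E-equations (complex form), for i = 0 and i = 1
  have hmems : ∀ i : Fin 4, Matrix.trace (bellProj i * T (mems l1 l2 l3 l4)) =
      (l1:ℂ) * Matrix.trace (bellProj i * T (bellProj 0))
      + (l2:ℂ) * Matrix.trace (bellProj i * T (ketBra (ket 0 1) (ket 0 1)))
      + (l3:ℂ) * Matrix.trace (bellProj i * T (bellProj 1))
      + (l4:ℂ) * Matrix.trace (bellProj i * T (ketBra (ket 1 0) (ket 1 0))) := by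
    intro i
    rw [mems, hTadd, hTadd, hTadd, hTsmul, hTsmul, hTsmul, hTsmul]
    simp only [Matrix.mul_add, Matrix.trace_add, Matrix.mul_smul, Matrix.trace_smul,
      smul_eq_mul]
  have hbd0 : Matrix.trace (bellProj 0 * bdiag l1 l2 l3 l4) = (l1:ℂ) := by
    rw [bdiag]
    simp only [Matrix.mul_add, Matrix.trace_add, Matrix.mul_smul, Matrix.trace_smul,
      smul_eq_mul, hBB, gram00, gram01, gram02, gram03]
    simp
  have hbd1 : Matrix.trace (bellProj 1 * bdiag l1 l2 l3 l4) = (l2:ℂ) := by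
    rw [bdiag]
    simp only [Matrix.mul_add, Matrix.trace_add, Matrix.mul_smul, Matrix.trace_smul,
      smul_eq_mul, hBB, gram10, gram11, gram12, gram13]
    simp
  have hE0c := congrArg (fun Y => Matrix.trace (bellProj 0 * Y)) hTρ
  rw [hmems 0, hbd0] at hE0c
  have hE1c := congrArg (fun Y => Matrix.trace (bellProj 1 * Y)) hTρ
  rw [hmems 1, hbd1] at hE1c
  have hE0 := congrArg Complex.re hE0c
  have hE1 := congrArg Complex.re hE1c
  simp only [Complex.add_re, Complex.re_ofReal_mul, Complex.ofReal_re] at hE0 hE1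
  -- sum rules
  have htrΦ0 : Matrix.trace (bellProj 0 : Mat4) = 1 := by
    rw [show (bellProj 0 : Mat4) = ketBra (bell 0) (bell 0) from rfl, trace_ketBra, gram00]
  have htrΦ1 : Matrix.trace (bellProj 1 : Mat4) = 1 := by
    rw [show (bellProj 1 : Mat4) = ketBra (bell 1) (bell 1) from rfl, trace_ketBra, gram11]
  have hFsumc := hcomplete (T (bellProj 0))
  rw [htp, htrΦ0] at hFsumc
  have hGsumc := hcomplete (T (bellProj 1))
  rw [htp, htrΦ1] at hGsumc
  have hFsum := congrArg Complex.re hFsumc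
  have hGsum := congrArg Complex.re hGsumc
  simp only [Complex.add_re, Complex.one_re] at hFsum hGsum
  -- the separability bound q0 + r0 + 2 F0 ≤ 2
  have hI3c := congrArg (fun X => Matrix.trace (bellProj 0 * T X)) idI3
  rw [two_bellProj0] at hI3c
  simp only [hTadd, hTsmul, Matrix.mul_add, Matrix.trace_add, Matrix.mul_smul,
    Matrix.trace_smul, smul_eq_mul] at hI3c
  have hI3r := congrArg Complex.re hI3c
  simp only [Complex.add_re, Complex.mul_re, Complex.re_ofNat, Complex.im_ofNat,
    zero_mul, sub_zero] at hI3r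
  have hx1 : (Matrix.trace (bellProj 0 * T (ketBra (wv 1 1) (wv 1 1)))).re ≤ 1/2 := by
    rw [← pvec_uc]
    exact hsep 0 (uc 1) (uc 1) (unit_uc 1 (by simp)) (unit_uc 1 (by simp))
  have hx2 : (Matrix.trace (bellProj 0 * T (ketBra (wv (-1) (-1)) (wv (-1) (-1))))).re ≤ 1/2 := by
    rw [← pvec_uc]
    exact hsep 0 (uc (-1)) (uc (-1)) (unit_uc _ (by simp)) (unit_uc _ (by simp))
  have hx3 : (Matrix.trace (bellProj 0 * T (ketBra (wv Complex.I (-Complex.I))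
      (wv Complex.I (-Complex.I))))).re ≤ 1/2 := by
    rw [← pvec_uc]
    exact hsep 0 (uc Complex.I) (uc (-Complex.I)) (unit_uc _ (by simp)) (unit_uc _ (by simp))
  have hx4 : (Matrix.trace (bellProj 0 * T (ketBra (wv (-Complex.I) Complex.I)
      (wv (-Complex.I) Complex.I)))).re ≤ 1/2 := by
    rw [← pvec_uc]
    exact hsep 0 (uc (-Complex.I)) (uc Complex.I) (unit_uc _ (by simp)) (unit_uc _ (by simp))
  -- the identity F0 + G0 = p0 + s0
  have hI2c := congrArg (fun X => Matrix.trace (bellProj 0 * T X)) idI2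
  simp only [hTadd, Matrix.mul_add, Matrix.trace_add] at hI2c
  have hI2r := congrArg Complex.re hI2c
  simp only [Complex.add_re] at hI2r
  -- separability bounds on individual basis states
  have hq0 : (Matrix.trace (bellProj 0 * T (ketBra (ket 0 1) (ket 0 1)))).re ≤ 1/2 := by
    have := hsep 0 (e2 0) (e2 1) (unit_e2 0) (unit_e2 1); rwa [pvec_e2] at this
  have hq1 : (Matrix.trace (bellProj 1 * T (ketBra (ket 0 1) (ket 0 1)))).re ≤ 1/2 := by
    have := hsep 1 (e2 0) (e2 1) (unit_e2 0) (unit_e2 1); rwa [pvec_e2] at this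
  have hr1 : (Matrix.trace (bellProj 1 * T (ketBra (ket 1 0) (ket 1 0)))).re ≤ 1/2 := by
    have := hsep 1 (e2 1) (e2 0) (unit_e2 1) (unit_e2 0); rwa [pvec_e2] at this
  have hp0 : (Matrix.trace (bellProj 0 * T (ketBra (ket 0 0) (ket 0 0)))).re ≤ 1/2 := by
    have := hsep 0 (e2 0) (e2 0) (unit_e2 0) (unit_e2 0); rwa [pvec_e2] at this
  have hs0 : (Matrix.trace (bellProj 0 * T (ketBra (ket 1 1) (ket 1 1)))).re ≤ 1/2 := by
    have := hsep 0 (e2 1) (e2 1) (unit_e2 1) (unit_e2 1); rwa [pvec_e2] at this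
  -- positivity instances
  have hF : ∀ i : Fin 4, 0 ≤ (Matrix.trace (bellProj i * T (bellProj 0))).re :=
    fun i => hpos i (bell 0)
  have hG : ∀ i : Fin 4, 0 ≤ (Matrix.trace (bellProj i * T (bellProj 1))).re :=
    fun i => hpos i (bell 1)
  have hr0 : 0 ≤ (Matrix.trace (bellProj 0 * T (ketBra (ket 1 0) (ket 1 0)))).re :=
    hpos 0 (ket 1 0)
  have hq0' : 0 ≤ (Matrix.trace (bellProj 0 * T (ketBra (ket 0 1) (ket 0 1)))).re :=
    hpos 0 (ket 0 1)
  -- final real arithmetic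
  have hF0' := hF 0
  have hF1' := hF 1
  have hF2' := hF 2
  have hF3' := hF 3
  have hG0' := hG 0
  have hG1' := hG 1
  have hG2' := hG 2
  have hG3' := hG 3
  clear hI3c hI2c hE0c hE1c hFsumc hGsumc hmems hbd0 hbd1 hBB hcomplete hsep hpos htp
    hTadd hTsmul hKr hK1 hNE hTρ htrΦ0 htrΦ1 hF hG
  set F0 := (Matrix.trace (bellProj 0 * T (bellProj 0))).re
  set F1 := (Matrix.trace (bellProj 1 * T (bellProj 0))).re
  set F2 := (Matrix.trace (bellProj 2 * T (bellProj 0))).re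
  set F3 := (Matrix.trace (bellProj 3 * T (bellProj 0))).re
  set G0 := (Matrix.trace (bellProj 0 * T (bellProj 1))).re
  set G1 := (Matrix.trace (bellProj 1 * T (bellProj 1))).re
  set G2 := (Matrix.trace (bellProj 2 * T (bellProj 1))).re
  set G3 := (Matrix.trace (bellProj 3 * T (bellProj 1))).re
  set q0 := (Matrix.trace (bellProj 0 * T (ketBra (ket 0 1) (ket 0 1)))).re
  set q1 := (Matrix.trace (bellProj 1 * T (ketBra (ket 0 1) (ket 0 1)))).re
  set r0 := (Matrix.trace (bellProj 0 * T (ketBra (ket 1 0) (ket 1 0)))).re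
  set r1 := (Matrix.trace (bellProj 1 * T (ketBra (ket 1 0) (ket 1 0)))).re
  set p0 := (Matrix.trace (bellProj 0 * T (ketBra (ket 0 0) (ket 0 0)))).re
  set s0 := (Matrix.trace (bellProj 0 * T (ketBra (ket 1 1) (ket 1 1)))).re
  clear_value F0 F1 F2 F3 G0 G1 G2 G3 q0 q1 r0 r1 p0 s0
  have hl2 : 0 < l2 := by linarith
  have hl3 : 0 ≤ l3 := by linarith
  have hSb : q0 + r0 + 2 * F0 ≤ 2 := by linarith [hI3r, hx1, hx2, hx3, hx4]
  clear hI3r hx1 hx2 hx3 hx4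
  have hG0le : G0 ≤ 1 - F0 := by linarith [hI2r, hp0, hs0]
  have h1F : 0 ≤ 1 - F0 := by linarith [hG0']
  have m1 : l3 * G0 ≤ l3 * (1 - F0) := mul_le_mul_of_nonneg_left hG0le hl3
  have m2 : l4 * r0 ≤ l2 * r0 := mul_le_mul_of_nonneg_right (by linarith) hr0
  have m3 : l2 * (q0 + r0) ≤ l2 * (2 - 2 * F0) := by
    apply mul_le_mul_of_nonneg_left _ (le_of_lt hl2); linarith
  have key : l1 * (1 - F0) ≤ l3 * (1 - F0) + 2 * l2 * (1 - F0) := by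
    nlinarith [hE0, m1, m2, m3]
  have hc : 0 < l1 - l3 - 2 * l2 := by linarith
  have hF0one : 1 ≤ F0 := by nlinarith [key, hc, h1F]
  clear key hc m1 m2 m3
  have hF1zero : F1 = 0 := by linarith [hFsum, hF1', hF2', hF3', hF0']
  have hG1le : G1 ≤ 1 := by linarith [hGsum, hG0', hG2', hG3']
  have m4 : l2 * q1 ≤ l2 * (1/2) := mul_le_mul_of_nonneg_left hq1 (le_of_lt hl2)
  have m5 : l3 * G1 ≤ l3 := mul_le_of_le_one_right hl3 hG1le
  have m6 : l4 * r1 ≤ l4 * (1/2) := mul_le_mul_of_nonneg_left hr1 h4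
  have hzero : l1 * F1 = 0 := by rw [hF1zero, mul_zero]
  linarith [hE1, hzero, m4, m5, m6]
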